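/- Let (X, d_X) be a quasi cone metric space over (E, P) and (Y, d_Y) a quasi cone metric space over (E', P'). Let {f_n} be a backward arithmetic convergent sequence of functions from X to Y, let x₀ ∈ X, and let {y_n} be a sequence in Y such that: (i) for every u ∈ E with 0 ≪ u there exists x ∈ X with d_X(x₀, x) ≪ u; and (ii) for each positive integer n and every u' ∈ E' with 0 ≪ u' there exists u ∈ E with 0 ≪ u such that every x ∈ X with d_X(x₀, x) ≪ u satisfies both d_Y(y_n, f_n(x)) ≪ u' and d_Y(f_n(x), y_n) ≪ u' (i.e., f_n(x) tends to y_n as x tends to x₀). Then the sequence {y_n} is backward arithmetic convergent in Y. -/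

import Mathlib

open Pointwise

/-- A cone in a real Banach space `E`: nonempty, closed, not `{0}`, closed under
nonnegative combinations, and `P ∩ (-P) = {0}`. -/
def IsCone {E : Type*} [NormedAddCommGroup E] [NormedSpace ℝ E] (P : Set E) : Prop :=
  P.Nonempty ∧ IsClosed P ∧ P ≠ {0} ∧
    (∀ x ∈ P, ∀ y ∈ P, ∀ s t : ℝ, 0 ≤ s → 0 ≤ t → s • x + t • y ∈ P) ∧
    P ∩ (-P) = {0}

/-- `a ≤ b` with respect to the cone `P`, i.e. `b - a ∈ P`. -/
def coneLE {E : Type*} [NormedAddCommGroup E] (P : Set E) (a b : E) : Prop :=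
  b - a ∈ P

/-- `a ≪ b` with respect to the cone `P`, i.e. `b - a ∈ interior P`. -/
def coneLT {E : Type*} [NormedAddCommGroup E] (P : Set E) (a b : E) : Prop :=
  b - a ∈ interior P

/-- `(X, d)` is a quasi cone metric space over `(E, P)`. -/
def IsQuasiConeMetric {E X : Type*} [NormedAddCommGroup E]
    (P : Set E) (d : X → X → E) : Prop :=
  (∀ x y : X, coneLE P 0 (d x y)) ∧
  (∀ x y : X, d x y = 0 ↔ x = y) ∧
  (∀ x y z : X, coneLE P (d x y) (d x z + d z y))

/-- A sequence (indexed by positive integers) is forward arithmetic convergent. -/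
def ForwardArithConv {E X : Type*} [NormedAddCommGroup E]
    (P : Set E) (d : X → X → E) (x : ℕ+ → X) : Prop :=
  ∀ u : E, coneLT P 0 u → ∃ N : ℕ+, ∀ n m : ℕ+,
    N ≤ PNat.gcd n m → coneLT P (d (x (PNat.gcd n m)) (x n)) u

/-- A sequence (indexed by positive integers) is backward arithmetic convergent. -/
def BackwardArithConv {E X : Type*} [NormedAddCommGroup E]
    (P : Set E) (d : X → X → E) (x : ℕ+ → X) : Prop :=
  ∀ u : E, coneLT P 0 u → ∃ N : ℕ+, ∀ n m : ℕ+,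
    N ≤ PNat.gcd n m → coneLT P (d (x n) (x (PNat.gcd n m))) u

/-- A sequence forward converges to `x₀`. -/
def ForwardConvTo {E X : Type*} [NormedAddCommGroup E]
    (P : Set E) (d : X → X → E) (x : ℕ+ → X) (x₀ : X) : Prop :=
  ∀ u : E, coneLT P 0 u → ∃ N : ℕ+, ∀ n : ℕ+, N ≤ n → coneLT P (d x₀ (x n)) u

/-- A sequence backward converges to `x₀`. -/
def BackwardConvTo {E X : Type*} [NormedAddCommGroup E]
    (P : Set E) (d : X → X → E) (x : ℕ+ → X) (x₀ : X) : Prop :=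
  ∀ u : E, coneLT P 0 u → ∃ N : ℕ+, ∀ n : ℕ+, N ≤ n → coneLT P (d (x n) x₀) u

/-- Forward convergence is equivalent to backward convergence in `(X, d)`. -/
def FwdEqBwdConv {E X : Type*} [NormedAddCommGroup E]
    (P : Set E) (d : X → X → E) : Prop :=
  ∀ (x : ℕ+ → X) (x₀ : X), ForwardConvTo P d x x₀ ↔ BackwardConvTo P d x x₀

/-- `f : X → Y` is arithmetic ff-continuous. -/
def ArithFFContinuous {E E' X Y : Type*} [NormedAddCommGroup E] [NormedAddCommGroup E']
    (P : Set E) (P' : Set E') (dX : X → X → E) (dY : Y → Y → E') (f : X → Y) : Prop :=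
  ∀ x : ℕ+ → X, ForwardArithConv P dX x → ForwardArithConv P' dY (fun n => f (x n))

/-- `f : X → Y` is arithmetic fb-continuous. -/
def ArithFBContinuous {E E' X Y : Type*} [NormedAddCommGroup E] [NormedAddCommGroup E']
    (P : Set E) (P' : Set E') (dX : X → X → E) (dY : Y → Y → E') (f : X → Y) : Prop :=
  ∀ x : ℕ+ → X, ForwardArithConv P dX x → BackwardArithConv P' dY (fun n => f (x n))

/-- `f : X → Y` is uniformly continuous between quasi cone metric spaces. -/
def QCMUniformlyContinuous {E E' X Y : Type*} [NormedAddCommGroup E] [NormedAddCommGroup E']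
    (P : Set E) (P' : Set E') (dX : X → X → E) (dY : Y → Y → E') (f : X → Y) : Prop :=
  ∀ u' : E', coneLT P' 0 u' → ∃ u : E, coneLT P 0 u ∧
    ∀ x y : X, coneLT P (dX x y) u → coneLT P' (dY (f x) (f y)) u'

/-- A sequence of functions `fₙ : X → Y` is forward arithmetic convergent. -/
def FwdArithConvFunSeq {E' X Y : Type*} [NormedAddCommGroup E']
    (P' : Set E') (dY : Y → Y → E') (fn : ℕ+ → X → Y) : Prop :=
  ∀ u' : E', coneLT P' 0 u' → ∃ n₀ : ℕ+, ∀ (x : X) (n m : ℕ+),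
    n₀ ≤ PNat.gcd n m → coneLT P' (dY (fn (PNat.gcd n m) x) (fn n x)) u'

/-- A sequence of functions `fₙ : X → Y` is backward arithmetic convergent. -/
def BwdArithConvFunSeq {E' X Y : Type*} [NormedAddCommGroup E']
    (P' : Set E') (dY : Y → Y → E') (fn : ℕ+ → X → Y) : Prop :=
  ∀ u' : E', coneLT P' 0 u' → ∃ n₀ : ℕ+, ∀ (x : X) (n m : ℕ+),
    n₀ ≤ PNat.gcd n m → coneLT P' (dY (fn n x) (fn (PNat.gcd n m) x)) u'

/-- `fₙ` forward converges uniformly to `f`. -/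
def UnifFwdConv {E' X Y : Type*} [NormedAddCommGroup E']
    (P' : Set E') (dY : Y → Y → E') (fn : ℕ+ → X → Y) (f : X → Y) : Prop :=
  ∀ u' : E', coneLT P' 0 u' → ∃ N : ℕ+, ∀ n : ℕ+, N ≤ n → ∀ x : X,
    coneLT P' (dY (f x) (fn n x)) u'

/-- `f : X → Y` is forward (cAC)-continuous. -/
def ForwardCACContinuous {E E' X Y : Type*} [NormedAddCommGroup E] [NormedAddCommGroup E']
    (P : Set E) (P' : Set E') (dX : X → X → E) (dY : Y → Y → E') (f : X → Y) : Prop :=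
  ∀ (x : ℕ+ → X) (x₀ : X), ForwardConvTo P dX x x₀ →
    ForwardArithConv P' dY (fun n => f (x n))

/-- `B` is forward arithmetic compact. -/
def ForwardArithCompact {E X : Type*} [NormedAddCommGroup E]
    (P : Set E) (d : X → X → E) (B : Set X) : Prop :=
  ∀ x : ℕ+ → X, (∀ n, x n ∈ B) → ∃ φ : ℕ+ → ℕ+, StrictMono φ ∧
    ForwardArithConv P d (fun n => x (φ n))

/-- `B` is backward arithmetic compact. -/
def BackwardArithCompact {E X : Type*} [NormedAddCommGroup E]
    (P : Set E) (d : X → X → E) (B : Set X) : Prop :=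
  ∀ x : ℕ+ → X, (∀ n, x n ∈ B) → ∃ φ : ℕ+ → ℕ+, StrictMono φ ∧
    BackwardArithConv P d (fun n => x (φ n))


/-! The three-ε argument: for `g = gcd(n, m)` pick one point `x` close enough to `x₀` that `f_n x`
is within `u'/3` of `y_n` and `f_g x` within `u'/3` of `y_g`; uniform backward arithmetic
convergence of `(f_n)` bounds the middle term `d(f_n x, f_g x)` by `u'/3`. The cone order is only
partial, so "close enough for both" needs a common lower bound in `interior P` of the two radii. -/

namespace IsCone

open Topology

variable {E : Type*} [NormedAddCommGroup E] [NormedSpace ℝ E] {P : Set E}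

theorem add_mem (hP : IsCone P) {a b : E} (ha : a ∈ P) (hb : b ∈ P) : a + b ∈ P := by
  simpa using hP.2.2.2.1 a ha b hb 1 1 zero_le_one zero_le_one

theorem smul_mem (hP : IsCone P) {t : ℝ} (ht : 0 ≤ t) {a : E} (ha : a ∈ P) : t • a ∈ P := by
  simpa using hP.2.2.2.1 a ha a ha t 0 ht le_rfl

theorem smul_mem_interior (hP : IsCone P) {t : ℝ} (ht : 0 < t) {a : E} (ha : a ∈ interior P) :
    t • a ∈ interior P := by
  refine interior_mono ?_ ((interior_smul₀ ht.ne' P).symm ▸ Set.smul_mem_smul_set ha)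
  rintro _ ⟨z, hz, rfl⟩
  exact hP.smul_mem ht.le hz

theorem add_mem_interior (hP : IsCone P) {a b : E} (ha : a ∈ interior P) (hb : b ∈ P) :
    a + b ∈ interior P := by
  refine interior_maximal ?_ isOpen_interior.add_right (Set.add_mem_add ha rfl)
  rintro _ ⟨p, hp, _, rfl, rfl⟩
  exact hP.add_mem (interior_subset hp) hb

theorem coneLT_of_coneLT_of_coneLE (hP : IsCone P) {a b c : E} (hab : coneLT P a b)
    (hbc : coneLE P b c) : coneLT P a c := by
  unfold coneLT coneLE at *
  simpa using hP.add_mem_interior hab hbc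

theorem coneLT_of_coneLE_of_coneLT (hP : IsCone P) {a b c : E} (hab : coneLE P a b)
    (hbc : coneLT P b c) : coneLT P a c := by
  unfold coneLT coneLE at *
  simpa using hP.add_mem_interior hbc hab

theorem coneLT_add (hP : IsCone P) {a b c d : E} (hab : coneLT P a b) (hcd : coneLT P c d) :
    coneLT P (a + c) (b + d) := by
  unfold coneLT at *
  simpa [add_sub_add_comm] using hP.add_mem_interior hab (interior_subset hcd)

/-- The witness is `t • a` for small `t ∈ (0, 1)`: `a - t • a = (1 - t) • a ∈ P` and
`b - t • a → b ∈ interior P`. -/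
theorem exists_coneLT_coneLE_coneLE (hP : IsCone P) {a b : E} (ha : coneLT P 0 a)
    (hb : coneLT P 0 b) : ∃ c, coneLT P 0 c ∧ coneLE P c a ∧ coneLE P c b := by
  unfold coneLT coneLE at *
  rw [sub_zero] at ha hb
  have hcont : Continuous fun t : ℝ => b - t • a := by fun_prop
  have hnear : ∀ᶠ t in 𝓝[>] (0 : ℝ), b - t • a ∈ interior P :=
    (hcont.continuousAt.eventually_mem (isOpen_interior.mem_nhds (by simpa using hb))).filter_mono
      nhdsWithin_le_nhds
  obtain ⟨t, hbt, ht0, ht1⟩ := (hnear.and (Ioo_mem_nhdsGT one_pos)).exists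
  refine ⟨t • a, by simpa using hP.smul_mem_interior ht0 ha, ?_, interior_subset hbt⟩
  simpa [sub_smul] using hP.smul_mem (sub_nonneg.2 ht1.le) (interior_subset ha)

end IsCone

theorem IsQuasiConeMetric.coneLT_add {E X : Type*} [NormedAddCommGroup E] [NormedSpace ℝ E]
    {P : Set E} (hP : IsCone P) {d : X → X → E} (hd : IsQuasiConeMetric P d) {x y z : X}
    {u v : E} (hxz : coneLT P (d x z) u) (hzy : coneLT P (d z y) v) :
    coneLT P (d x y) (u + v) :=
  hP.coneLT_of_coneLE_of_coneLT (hd.2.2 x y z) (hP.coneLT_add hxz hzy)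

theorem coneLT_of_limits_of_forall_coneLT {E E' X Y : Type*}
    [NormedAddCommGroup E] [NormedSpace ℝ E] [NormedAddCommGroup E'] [NormedSpace ℝ E']
    {P : Set E} {P' : Set E'} (hP : IsCone P) (hP' : IsCone P')
    {dX : X → X → E} {dY : Y → Y → E'} (hdY : IsQuasiConeMetric P' dY) {x₀ : X}
    (happrox : ∀ u : E, coneLT P 0 u → ∃ x : X, coneLT P (dX x₀ x) u)
    {f g : X → Y} {a b : Y} {v : E'}
    (hf : ∃ u, coneLT P 0 u ∧ ∀ x, coneLT P (dX x₀ x) u → coneLT P' (dY a (f x)) v)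
    (hg : ∃ u, coneLT P 0 u ∧ ∀ x, coneLT P (dX x₀ x) u → coneLT P' (dY (g x) b) v)
    (hfg : ∀ x, coneLT P' (dY (f x) (g x)) v) :
    coneLT P' (dY a b) (v + (v + v)) := by
  obtain ⟨uf, huf, hf⟩ := hf
  obtain ⟨ug, hug, hg⟩ := hg
  obtain ⟨c, hc, hcf, hcg⟩ := hP.exists_coneLT_coneLE_coneLE huf hug
  obtain ⟨x, hx⟩ := happrox c hc
  exact hdY.coneLT_add hP' (hf x (hP.coneLT_of_coneLT_of_coneLE hx hcf))
    (hdY.coneLT_add hP' (hfg x) (hg x (hP.coneLT_of_coneLT_of_coneLE hx hcg)))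

theorem bwdArithConvFunSeq_limit_general {E E' X Y : Type*}
    [NormedAddCommGroup E] [NormedSpace ℝ E]
    [NormedAddCommGroup E'] [NormedSpace ℝ E']
    (P : Set E) (P' : Set E')
    (hP : IsCone P) (hP' : IsCone P')
    (dX : X → X → E) (dY : Y → Y → E')
    (hdY : IsQuasiConeMetric P' dY)
    (fn : ℕ+ → X → Y) (hfn : BwdArithConvFunSeq P' dY fn)
    (x₀ : X) (y : ℕ+ → Y)
    (happrox : ∀ u : E, coneLT P 0 u → ∃ x : X, coneLT P (dX x₀ x) u)
    (hlim : ∀ n : ℕ+, ∀ u' : E', coneLT P' 0 u' → ∃ u : E, coneLT P 0 u ∧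
      ∀ x : X, coneLT P (dX x₀ x) u →
        coneLT P' (dY (y n) (fn n x)) u' ∧ coneLT P' (dY (fn n x) (y n)) u') :
    BackwardArithConv P' dY y := by
  intro u' hu'
  set v : E' := (3⁻¹ : ℝ) • u'
  have hv : coneLT P' 0 v := by
    simpa [coneLT] using hP'.smul_mem_interior (by norm_num) (by simpa [coneLT] using hu')
  obtain ⟨n₀, hn₀⟩ := hfn v hv
  refine ⟨n₀, fun n m hgcd => ?_⟩
  obtain ⟨uₙ, huₙ, hlimₙ⟩ := hlim n v hv
  obtain ⟨u_gcd, hu_gcd, hlim_gcd⟩ := hlim (n.gcd m) v hv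
  convert coneLT_of_limits_of_forall_coneLT hP hP' hdY happrox
    ⟨uₙ, huₙ, fun x hx => (hlimₙ x hx).1⟩ ⟨u_gcd, hu_gcd, fun x hx => (hlim_gcd x hx).2⟩
    (fun x => hn₀ x n m hgcd) using 1
  module

theorem bwdArithConvFunSeq_limit {E E' X Y : Type*}
    [NormedAddCommGroup E] [NormedSpace ℝ E] [CompleteSpace E]
    [NormedAddCommGroup E'] [NormedSpace ℝ E'] [CompleteSpace E']
    (P : Set E) (P' : Set E')
    (hP : IsCone P) (hP' : IsCone P')
    (hPint : (interior P).Nonempty) (hP'int : (interior P').Nonempty)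
    (dX : X → X → E) (dY : Y → Y → E')
    (hdX : IsQuasiConeMetric P dX) (hdY : IsQuasiConeMetric P' dY)
    (fn : ℕ+ → X → Y) (hfn : BwdArithConvFunSeq P' dY fn)
    (x₀ : X) (y : ℕ+ → Y)
    (happrox : ∀ u : E, coneLT P 0 u → ∃ x : X, coneLT P (dX x₀ x) u)
    (hlim : ∀ n : ℕ+, ∀ u' : E', coneLT P' 0 u' → ∃ u : E, coneLT P 0 u ∧
      ∀ x : X, coneLT P (dX x₀ x) u →
        coneLT P' (dY (y n) (fn n x)) u' ∧ coneLT P' (dY (fn n x) (y n)) u') :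
    BackwardArithConv P' dY y :=
  bwdArithConvFunSeq_limit_general P P' hP hP' dX dY hdY fn hfn x₀ y happrox hlim
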